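/- arXiv:2307.15150 — 4 statements merged into one kernel-verified Lean document; each statement's English description precedes it below -/
import Mathlib

section
/- With r i.i.d. Bernoulli(γ) on [m]×[n] and M the block-expanded mask with block size 2k+1, the expected number of 1-entries of M over the four k×k corner regions equals 4·(k² - Σ_{1 ≤ i,j ≤ k} (1-γ)^{(k+i)(k+j)}). -/
open MeasureTheory

/-- Product measure on an `m × n` grid of i.i.d. Bernoulli(γ) Boolean entries. -/
noncomputable def gridMeasure (m n : ℕ) (γ : ENNReal) (hγ : γ ≤ 1) :
    Measure ((Fin m × Fin n) → Bool) :=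
  Measure.pi fun _ => (PMF.bernoulli γ.toNNReal
    (by simpa using ENNReal.toNNReal_mono ENNReal.one_ne_top hγ)).toMeasure

/-- `maskOn m n k r i j` says the block-expanded mask `M` has a `1` at the (1-based)
grid position `(i, j)`: some grid entry `r` within Chebyshev distance `k` equals `1`. -/
def maskOn (m n k : ℕ) (r : (Fin m × Fin n) → Bool) (i j : ℕ) : Prop :=
  ∃ i' j' : ℕ, ∃ (h1 : 1 ≤ i') (h2 : i' ≤ m) (h3 : 1 ≤ j') (h4 : j' ≤ n),
    |(i' : ℤ) - (i : ℤ)| ≤ (k : ℤ) ∧ |(j' : ℤ) - (j : ℤ)| ≤ (k : ℤ) ∧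
    r (⟨i' - 1, by omega⟩, ⟨j' - 1, by omega⟩) = true

open scoped Classical

/-!
The mask is `1` at `(i, j)` exactly when some entry of the grid window
`[i - k, i + k] × [j - k, j + k]` is `1`, which by independence has probability
`1 - (1 - γ) ^ (window size)`. At distances `i, j ≤ k` from two edges the window, clipped to
the grid, is `(k + i) × (k + j)`, and reflecting in the edges shows that the four corners
contribute equally.
-/

open Finset

section BernoulliProduct

variable {ι : Type*} [Fintype ι] (p : NNReal) (hp : p ≤ 1)

theorem pi_bernoulli_forall_false (S : Finset ι) :
    Measure.pi (fun _ : ι => (PMF.bernoulli p hp).toMeasure) {r | ∀ q ∈ S, r q = false}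
      = (1 - p) ^ #S := by
  have hS : {r : ι → Bool | ∀ q ∈ S, r q = false} = (S : Set ι).pi fun _ => {false} := by
    ext r; simp
  rw [hS, Measure.pi_pi_finset, PMF.toMeasure_apply_singleton _ _ (measurableSet_singleton _),
    PMF.bernoulli_apply, prod_const]
  simp

theorem pi_bernoulli_exists_true (S : Finset ι) :
    Measure.pi (fun _ : ι => (PMF.bernoulli p hp).toMeasure) {r | ∃ q ∈ S, r q = true}
      = 1 - (1 - p) ^ #S := by
  have hS : {r : ι → Bool | ∃ q ∈ S, r q = true} = {r | ∀ q ∈ S, r q = false}ᶜ := by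
    ext r; simp
  rw [hS, prob_compl_eq_one_sub MeasurableSet.of_discrete, pi_bernoulli_forall_false]

end BernoulliProduct

theorem gridMeasure_exists_true {m n : ℕ} {γ : ENNReal} (hγ : γ ≤ 1)
    (S : Finset (Fin m × Fin n)) :
    gridMeasure m n γ hγ {r | ∃ q ∈ S, r q = true} = 1 - (1 - γ) ^ #S := by
  rw [gridMeasure]
  refine (pi_bernoulli_exists_true _ _ S).trans ?_
  rw [ENNReal.coe_toNNReal (ne_top_of_le_ne_top ENNReal.one_ne_top hγ)]

theorem sum_one_sub_eq_card_sub {ι : Type*} (s : Finset ι) {f : ι → ENNReal}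
    (hf : ∀ i ∈ s, f i ≤ 1) : ∑ i ∈ s, (1 - f i) = #s - ∑ i ∈ s, f i := by
  refine ENNReal.eq_sub_of_add_eq (ENNReal.sum_ne_top.2 fun i hi => ?_) ?_
  · exact ne_top_of_le_ne_top ENNReal.one_ne_top (hf i hi)
  · rw [← sum_add_distrib, sum_congr rfl fun i hi => tsub_add_cancel_of_le (hf i hi)]
    simp

def gridWindow (m k i : ℕ) : Finset (Fin m) :=
  {a : Fin m | i ≤ a + 1 + k ∧ a + 1 ≤ i + k}

theorem maskOn_iff_exists_gridWindow {m n k : ℕ} {r : (Fin m × Fin n) → Bool} {i j : ℕ} :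
    maskOn m n k r i j ↔ ∃ q ∈ gridWindow m k i ×ˢ gridWindow n k j, r q = true := by
  simp only [maskOn, gridWindow, Prod.exists, mem_product, mem_filter, mem_univ, true_and,
    abs_le]
  constructor
  · rintro ⟨i', j', _, _, _, _, hi, hj, hr⟩
    exact ⟨⟨i' - 1, by omega⟩, ⟨j' - 1, by omega⟩, by simp only; omega, hr⟩
  · rintro ⟨a, b, hab, hr⟩
    refine ⟨a + 1, b + 1, by omega, a.isLt, by omega, b.isLt, by omega, by omega, ?_⟩
    simpa using hr

theorem card_gridWindow (m k i : ℕ) : #(gridWindow m k i) = min m (i + k) - (i - (k + 1)) := by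
  rw [← card_map Fin.valEmbedding, ← Nat.card_Ico]
  congr 1
  ext a
  simp only [gridWindow, mem_map, mem_filter, mem_univ, true_and, Fin.valEmbedding_apply,
    mem_Ico]
  constructor
  · rintro ⟨a, ha, rfl⟩
    omega
  · intro ha
    exact ⟨⟨a, by omega⟩, by simp only; omega, rfl⟩

theorem sum_border_card_gridWindow {M : Type*} [AddCommMonoid M] {m k : ℕ} (hkm : 2 * k < m)
    (g : ℕ → M) :
    ∑ i ∈ Icc 1 k ∪ Icc (m - k + 1) m, g #(gridWindow m k i) =
      2 • ∑ i ∈ Icc 1 k, g (k + i) := by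
  have hdisj : Disjoint (Icc 1 k) (Icc (m - k + 1) m) :=
    disjoint_left.2 fun a ha hb => by simp only [mem_Icc] at ha hb; omega
  have hfar :
      ∑ i ∈ Icc (m - k + 1) m, g #(gridWindow m k i) = ∑ i ∈ Icc 1 k, g (k + i) := by
    refine sum_nbij' (fun i => m + 1 - i) (fun i => m + 1 - i) ?_ ?_ ?_ ?_ ?_ <;>
      intro i hi <;> simp only [mem_Icc] at hi ⊢ <;> try omega
    rw [card_gridWindow]; congr 1; omega
  rw [sum_union hdisj, hfar, sum_congr rfl fun i hi => ?_, two_nsmul]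
  rw [card_gridWindow]; simp only [mem_Icc] at hi; congr 1; omega

theorem corner_expected_count_general (m n k : ℕ)
    (hm : 2 * (2 * k + 1) < m) (hn : 2 * (2 * k + 1) < n)
    (γ : ENNReal) (hγ : γ ≤ 1) :
    (∫⁻ r, (∑ p ∈ (Finset.Icc 1 k ∪ Finset.Icc (m - k + 1) m) ×ˢ
          (Finset.Icc 1 k ∪ Finset.Icc (n - k + 1) n),
        if maskOn m n k r p.1 p.2 then (1 : ENNReal) else 0) ∂(gridMeasure m n γ hγ))
      = 4 * ((k ^ 2 : ENNReal) -
          ∑ i ∈ Finset.Icc 1 k, ∑ j ∈ Finset.Icc 1 k, (1 - γ) ^ ((k + i) * (k + j))) := by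
  have hprob : ∀ i j, ∫⁻ r, (if maskOn m n k r i j then (1 : ENNReal) else 0)
      ∂(gridMeasure m n γ hγ) = 1 - (1 - γ) ^ (#(gridWindow m k i) * #(gridWindow n k j)) := by
    intro i j
    rw [← card_product, ← gridMeasure_exists_true hγ,
      ← lintegral_indicator_one MeasurableSet.of_discrete]
    simp only [Set.indicator_apply, Set.mem_ofPred_eq, Pi.one_apply,
      maskOn_iff_exists_gridWindow]
  rw [lintegral_finsetSum _ fun _ _ => .of_discrete, sum_product]
  simp only [hprob]
  rw [sum_congr rfl fun i _ => sum_border_card_gridWindow (by omega)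
      fun c => 1 - (1 - γ) ^ (#(gridWindow m k i) * c)]
  rw [sum_border_card_gridWindow (by omega)
      fun c => 2 • ∑ j ∈ Icc 1 k, (1 - (1 - γ) ^ (c * (k + j)))]
  rw [← smul_sum, smul_smul,
    ← sum_product' (f := fun i j => 1 - (1 - γ) ^ ((k + i) * (k + j))),
    sum_one_sub_eq_card_sub _ fun _ _ => pow_le_one' tsub_le_self _, card_product, sum_product]
  norm_num [sq]

/-- Expected number of `1`-entries of the block-expanded mask over the four `k × k`
corner regions equals `4 (k² - Σ_{1 ≤ i,j ≤ k} (1-γ)^{(k+i)(k+j)})`. -/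
theorem corner_expected_count (m n k : ℕ) (hk : 1 ≤ k)
    (hm : 2 * (2 * k + 1) < m) (hn : 2 * (2 * k + 1) < n)
    (γ : ENNReal) (hγ : γ ≤ 1) :
    (∫⁻ r, (∑ p ∈ (Finset.Icc 1 k ∪ Finset.Icc (m - k + 1) m) ×ˢ
          (Finset.Icc 1 k ∪ Finset.Icc (n - k + 1) n),
        if maskOn m n k r p.1 p.2 then (1 : ENNReal) else 0) ∂(gridMeasure m n γ hγ))
      = 4 * ((k ^ 2 : ENNReal) -
          ∑ i ∈ Finset.Icc 1 k, ∑ j ∈ Finset.Icc 1 k, (1 - γ) ^ ((k + i) * (k + j))) :=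
  corner_expected_count_general m n k hm hn γ hγ
end

section
/- Let r be i.i.d. Bernoulli(γ) on [m]×[n], M the block-expanded mask with block size b = 2k+1, m,n > 2b, and p = E[Σ_{i,j} M_{i,j}]/(mn) the expected fraction of dropped units. Then p = (1-2k/m)(1-2k/n)(1-(1-γ)^{(2k+1)^2}) + (4/(mn))(k² - Σ_{1≤i,j≤k}(1-γ)^{(k+i)(k+j)}) + 2(1/m + 1/n - 4k/(mn))·(k - (1-γ)^{(2k+1)(k+1)}(1-(1-γ)^{(2k+1)k})/(1-(1-γ)^{2k+1})). -/
/-!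
The expected number of masked cells is `∑ P(M i j = 1) = ∑ (1 - (1 - γ) ^ |N(i, j)|)`, where the
neighbourhood `N(i, j)` clipped to the grid is the product of a row window and a column window.
A window has `2k + 1` elements except at the `k` positions next to each border, where its sizes
are `k + 1, …, 2k`. Splitting both sums accordingly gives the interior, edge and corner terms;
the edge term is a geometric series in `(1 - γ) ^ (2k + 1)`.
-/

open MeasureTheory

open scoped Classical

open Finset
open scoped ENNReal

/-- Rows of `Fin m` are 0-based, while the positions `i` in `maskOn` are 1-based. -/
def window (m k i : ℕ) : Finset (Fin m) :=
  univ.filter fun a => |((a : ℕ) : ℤ) + 1 - i| ≤ k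

lemma mem_window {m k i : ℕ} {a : Fin m} :
    a ∈ window m k i ↔ |((a : ℕ) : ℤ) + 1 - i| ≤ k := by
  simp [window]

lemma card_window {m k i : ℕ} (hi : 1 ≤ i) (hm : i ≤ m) :
    #(window m k i) = min (i + k) m + 1 - max (i - k) 1 := by
  have : #(window m k i) = #(Icc (max (i - k) 1) (min (i + k) m)) := by
    refine card_bij (fun a _ => (a : ℕ) + 1) (fun a ha => ?_) (fun a _ b _ h => ?_)
      (fun b hb => ?_)
    · rw [mem_window, abs_le] at ha
      simp only [mem_Icc]
      omega
    · exact Fin.ext (by omega)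
    · simp only [mem_Icc] at hb
      exact ⟨⟨b - 1, by omega⟩, by rw [mem_window, abs_le]; push_cast; omega, by simp only; omega⟩
  rw [this, Nat.card_Icc]

lemma sum_card_window {M : Type*} [AddCommMonoid M] {m k : ℕ} (hm : 2 * k ≤ m) (f : ℕ → M) :
    ∑ i ∈ Icc 1 m, f #(window m k i)
      = (m - 2 * k) • f (2 * k + 1) + 2 • ∑ i ∈ Icc 1 k, f (k + i) := by
  have hsplit : ∑ i ∈ Icc 1 m, f #(window m k i) = ∑ i ∈ Ioc 0 k, f #(window m k i)
      + ∑ i ∈ Ioc k (m - k), f #(window m k i) + ∑ i ∈ Ioc (m - k) m, f #(window m k i) := by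
    rw [sum_Ioc_consecutive _ (by omega) (by omega), sum_Ioc_consecutive _ (by omega) (by omega),
      ← Icc_add_one_left_eq_Ioc, zero_add]
  have left : ∑ i ∈ Ioc 0 k, f #(window m k i) = ∑ i ∈ Icc 1 k, f (k + i) := by
    refine sum_congr (Icc_add_one_left_eq_Ioc 0 k).symm fun i hi => ?_
    rw [mem_Icc] at hi
    rw [card_window (by omega) (by omega)]
    congr 1
    omega
  have middle : ∑ i ∈ Ioc k (m - k), f #(window m k i) = (m - 2 * k) • f (2 * k + 1) := by
    rw [sum_congr rfl fun i hi => ?_, sum_const, Nat.card_Ioc, show m - k - k = m - 2 * k by omega]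
    rw [mem_Ioc] at hi
    rw [card_window (by omega) (by omega)]
    congr 1
    omega
  have right : ∑ i ∈ Ioc (m - k) m, f #(window m k i) = ∑ i ∈ Icc 1 k, f (k + i) := by
    refine sum_nbij' (fun i => m + 1 - i) (fun i => m + 1 - i) (fun i hi => ?_) (fun i hi => ?_)
      (fun i hi => ?_) (fun i hi => ?_) (fun i hi => ?_) <;>
      simp only [mem_Ioc, mem_Icc] at hi ⊢ <;> try omega
    rw [card_window (by omega) (by omega)]
    congr 1
    omega
  rw [hsplit, left, middle, right, two_nsmul]
  abel

lemma sum_sum_card_window_mul {R : Type*} [CommSemiring R] {m n k : ℕ} (hm : 2 * k ≤ m)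
    (hn : 2 * k ≤ n) (h : ℕ → R) :
    ∑ i ∈ Icc 1 m, ∑ j ∈ Icc 1 n, h (#(window m k i) * #(window n k j))
      = (m - 2 * k : ℕ) * (n - 2 * k : ℕ) * h ((2 * k + 1) * (2 * k + 1))
        + 2 * ((m - 2 * k : ℕ) + (n - 2 * k : ℕ)) * ∑ i ∈ Icc 1 k, h ((2 * k + 1) * (k + i))
        + 4 * ∑ i ∈ Icc 1 k, ∑ j ∈ Icc 1 k, h ((k + i) * (k + j)) := by
  have inner : ∀ a, ∑ j ∈ Icc 1 n, h (a * #(window n k j))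
      = (n - 2 * k) • h (a * (2 * k + 1)) + 2 • ∑ j ∈ Icc 1 k, h (a * (k + j)) :=
    fun a => sum_card_window hn fun c => h (a * c)
  have outer : ∀ b, ∑ i ∈ Icc 1 m, h (#(window m k i) * b)
      = (m - 2 * k) • h ((2 * k + 1) * b) + 2 • ∑ i ∈ Icc 1 k, h ((k + i) * b) :=
    fun b => sum_card_window hm fun c => h (c * b)
  simp_rw [inner, sum_add_distrib, ← smul_sum]
  rw [sum_comm (s := Icc 1 m)]
  simp_rw [outer, smul_add, sum_add_distrib, ← smul_sum, nsmul_eq_mul,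
    mul_comm (k + _) (2 * k + 1)]
  rw [sum_comm (s := Icc 1 k) (t := Icc 1 k)]
  push_cast
  ring

lemma maskOn_iff_exists_mem_window {m n k : ℕ} {r : Fin m × Fin n → Bool} {i j : ℕ} :
    maskOn m n k r i j ↔ ∃ p ∈ window m k i ×ˢ window n k j, r p = true := by
  constructor
  · rintro ⟨i', j', h1, h2, h3, h4, hi, hj, hr⟩
    refine ⟨(⟨i' - 1, by omega⟩, ⟨j' - 1, by omega⟩), ?_, hr⟩
    rw [mem_product, mem_window, mem_window]
    simp only [abs_le] at *
    omega
  · rintro ⟨⟨a, b⟩, hp, hr⟩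
    simp only [mem_product, mem_window, abs_le] at hp
    refine ⟨a + 1, b + 1, by omega, by omega, by omega, by omega, ?_, ?_, hr⟩ <;>
      rw [abs_le] <;> push_cast <;> omega

namespace gridMeasure

variable {m n : ℕ} {γ : ℝ≥0∞} (hγ : γ ≤ 1)

instance : IsProbabilityMeasure (gridMeasure m n γ hγ) := by
  unfold gridMeasure
  infer_instance

lemma measure_forall_false (W : Finset (Fin m × Fin n)) :
    gridMeasure m n γ hγ {r | ∀ p ∈ W, r p = false} = (1 - γ) ^ #W := by
  have : {r : Fin m × Fin n → Bool | ∀ p ∈ W, r p = false} = (W : Set _).pi fun _ => {false} := by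
    ext r
    simp
  rw [this, gridMeasure, Measure.pi_pi_finset, prod_const,
    PMF.toMeasure_apply_singleton _ _ (measurableSet_singleton _)]
  simp [PMF.bernoulli, ENNReal.coe_toNNReal (ne_top_of_le_ne_top ENNReal.one_ne_top hγ)]

lemma measure_maskOn (k i j : ℕ) :
    gridMeasure m n γ hγ {r | maskOn m n k r i j}
      = 1 - (1 - γ) ^ (#(window m k i) * #(window n k j)) := by
  have : {r | maskOn m n k r i j} = {r | ∀ p ∈ window m k i ×ˢ window n k j, r p = false}ᶜ := by
    ext r
    simp only [maskOn_iff_exists_mem_window, Set.mem_compl_iff, Set.mem_ofPred_eq, not_forall,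
      Bool.not_eq_false, exists_prop]
  rw [this, prob_compl_eq_one_sub (Set.toFinite _).measurableSet, measure_forall_false,
    card_product]

lemma lintegral_sum_maskOn (k : ℕ) (s t : Finset ℕ) :
    ∫⁻ r, (∑ i ∈ s, ∑ j ∈ t, if maskOn m n k r i j then (1 : ℝ≥0∞) else 0)
        ∂(gridMeasure m n γ hγ)
      = ∑ i ∈ s, ∑ j ∈ t, (1 - (1 - γ) ^ (#(window m k i) * #(window n k j))) := by
  rw [lintegral_finsetSum _ fun i _ => measurable_of_finite _]
  refine sum_congr rfl fun i _ => ?_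
  rw [lintegral_finsetSum _ fun j _ => measurable_of_finite _]
  refine sum_congr rfl fun j _ => ?_
  rw [← measure_maskOn, ← lintegral_indicator_one (Set.toFinite _).measurableSet]
  rfl

end gridMeasure

namespace ENNReal

lemma natCast_div_sub_natCast_div (a b : ℕ) {c : ℝ≥0∞} (hc : c ≠ 0) :
    (a : ℝ≥0∞) / c - b / c = (a - b : ℕ) / c := by
  rw [← ENNReal.sub_div fun _ _ => hc, ENNReal.natCast_sub]

lemma one_sub_natCast_div (a : ℕ) {b : ℕ} (hb : b ≠ 0) :
    1 - (a : ℝ≥0∞) / b = (b - a : ℕ) / b := by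
  rw [← natCast_div_sub_natCast_div _ _ (Nat.cast_ne_zero.2 hb),
    ENNReal.div_self (Nat.cast_ne_zero.2 hb) (natCast_ne_top b)]

lemma one_div_add_one_div_sub_natCast_div (a : ℕ) {m n : ℕ} (hm : m ≠ 0) (hn : n ≠ 0) :
    1 / (m : ℝ≥0∞) + 1 / n - a / (m * n) = (m + n - a : ℕ) / (m * n) := by
  have hm' : (m : ℝ≥0∞) ≠ 0 := Nat.cast_ne_zero.2 hm
  have hn' : (n : ℝ≥0∞) ≠ 0 := Nat.cast_ne_zero.2 hn
  rw [← ENNReal.mul_div_mul_right 1 _ hn' (natCast_ne_top n),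
    ← ENNReal.mul_div_mul_left 1 _ hm' (natCast_ne_top m), ENNReal.div_add_div_same, one_mul,
    mul_one, add_comm, ← Nat.cast_add, natCast_div_sub_natCast_div _ _ (mul_ne_zero hm' hn')]

lemma sum_one_sub {ι : Type*} (s : Finset ι) {f : ι → ℝ≥0∞} (hf : ∀ i ∈ s, f i ≤ 1) :
    ∑ i ∈ s, (1 - f i) = #s - ∑ i ∈ s, f i := by
  refine ENNReal.eq_sub_of_add_eq
    (sum_ne_top.2 fun i hi => ne_top_of_le_ne_top one_ne_top (hf i hi)) ?_
  rw [← sum_add_distrib, sum_congr rfl fun i hi => tsub_add_cancel_of_le (hf i hi)]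
  simp

lemma geom_sum_mul_one_sub {x : ℝ≥0∞} (hx : x ≤ 1) (N : ℕ) :
    (∑ i ∈ range N, x ^ i) * (1 - x) = 1 - x ^ N := by
  lift x to NNReal using ne_top_of_le_ne_top one_ne_top hx
  have := geom_sum₂_mul_of_le (coe_le_one_iff.1 hx) N
  simp only [one_pow, mul_one] at this
  exact_mod_cast congrArg ((↑) : NNReal → ℝ≥0∞) this

lemma pow_mul_one_sub_pow_div_one_sub {x : ℝ≥0∞} (hx : x < 1) (k : ℕ) :
    x ^ (k + 1) * (1 - x ^ k) / (1 - x) = ∑ i ∈ Icc 1 k, x ^ (k + i) := by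
  have hx' : 1 - x ≠ ⊤ := ne_top_of_le_ne_top one_ne_top tsub_le_self
  rw [← geom_sum_mul_one_sub hx.le, ← mul_assoc,
    ENNReal.mul_div_cancel_right (tsub_pos_of_lt hx).ne' hx',
    ← Ico_add_one_right_eq_Icc, sum_Ico_eq_sum_range, mul_sum]
  refine sum_congr (by simp) fun i _ => ?_
  rw [← pow_add]
  congr 1
  omega

end ENNReal

theorem p_gamma_relationship_general (m n k : ℕ)
    (hm : 2 * (2 * k + 1) < m) (hn : 2 * (2 * k + 1) < n)
    (γ : ENNReal) (hγ0 : γ ≠ 0) (hγ1 : γ < 1) :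
    (∫⁻ r, (∑ i ∈ Finset.Icc 1 m, ∑ j ∈ Finset.Icc 1 n,
        if maskOn m n k r i j then (1 : ENNReal) else 0)
          ∂(gridMeasure m n γ hγ1.le)) / ((m : ENNReal) * n)
      = (1 - 2 * k / (m : ENNReal)) * (1 - 2 * k / (n : ENNReal)) *
          (1 - (1 - γ) ^ ((2 * k + 1) ^ 2))
        + 4 * ((k ^ 2 : ENNReal) -
            ∑ i ∈ Finset.Icc 1 k, ∑ j ∈ Finset.Icc 1 k,
              (1 - γ) ^ ((k + i) * (k + j))) / ((m : ENNReal) * n)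
        + 2 * (1 / (m : ENNReal) + 1 / (n : ENNReal) - 4 * k / ((m : ENNReal) * n)) *
            ((k : ENNReal) - (1 - γ) ^ ((2 * k + 1) * (k + 1)) *
              (1 - (1 - γ) ^ ((2 * k + 1) * k)) / (1 - (1 - γ) ^ (2 * k + 1))) := by
  rw [gridMeasure.lintegral_sum_maskOn,
    sum_sum_card_window_mul (by omega) (by omega) fun c => 1 - (1 - γ) ^ c]
  set q := 1 - γ
  have hq : q < 1 := ENNReal.sub_lt_self ENNReal.one_ne_top one_ne_zero hγ0
  have hq_pow : ∀ e, q ^ e ≤ 1 := fun e => pow_le_one₀ zero_le hq.le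
  have hm0 : (m : ℝ≥0∞) ≠ 0 := Nat.cast_ne_zero.2 (by omega)
  have interior (N : ℕ) (hN : N ≠ 0) : 1 - 2 * k / (N : ℝ≥0∞) = (N - 2 * k : ℕ) / N := by
    exact_mod_cast ENNReal.one_sub_natCast_div (2 * k) hN
  have edges : 1 / (m : ℝ≥0∞) + 1 / n - 4 * k / (m * n)
      = ((m - 2 * k : ℕ) + (n - 2 * k : ℕ) : ℝ≥0∞) / (m * n) := by
    rw [← Nat.cast_add, show m - 2 * k + (n - 2 * k) = m + n - 4 * k by omega]
    exact_mod_cast ENNReal.one_div_add_one_div_sub_natCast_div (4 * k) (by omega) (by omega)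
  have corners : (k ^ 2 : ℝ≥0∞) - ∑ i ∈ Icc 1 k, ∑ j ∈ Icc 1 k, q ^ ((k + i) * (k + j))
      = ∑ i ∈ Icc 1 k, ∑ j ∈ Icc 1 k, (1 - q ^ ((k + i) * (k + j))) := by
    rw [← sum_product' (f := fun i j => 1 - q ^ ((k + i) * (k + j))),
      ENNReal.sum_one_sub _ fun _ _ => hq_pow _,
      sum_product' (f := fun i j => q ^ ((k + i) * (k + j))), card_product, Nat.card_Icc,
      Nat.add_sub_cancel, ← sq, Nat.cast_pow]
  have sides : (k : ℝ≥0∞) - q ^ ((2 * k + 1) * (k + 1)) * (1 - q ^ ((2 * k + 1) * k))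
        / (1 - q ^ (2 * k + 1))
      = ∑ i ∈ Icc 1 k, (1 - q ^ ((2 * k + 1) * (k + i))) := by
    rw [pow_mul, pow_mul,
      ENNReal.pow_mul_one_sub_pow_div_one_sub (pow_lt_one₀ zero_le hq (by omega)),
      ENNReal.sum_one_sub _ fun _ _ => hq_pow _, Nat.card_Icc, Nat.add_sub_cancel]
    simp only [← pow_mul]
  rw [interior m (by omega), interior n (by omega), edges, corners, sides, ← sq]
  simp only [div_eq_mul_inv]
  rw [ENNReal.mul_inv (Or.inl hm0) (Or.inl (ENNReal.natCast_ne_top m))]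
  ring

/-- The p–γ relationship: the expected fraction `p` of dropped units over the whole
`m × n` grid equals the boundary-corrected closed-form expression. -/
theorem p_gamma_relationship (m n k : ℕ) (hk : 1 ≤ k)
    (hm : 2 * (2 * k + 1) < m) (hn : 2 * (2 * k + 1) < n)
    (γ : ENNReal) (hγ0 : γ ≠ 0) (hγ1 : γ < 1) :
    (∫⁻ r, (∑ i ∈ Finset.Icc 1 m, ∑ j ∈ Finset.Icc 1 n,
        if maskOn m n k r i j then (1 : ENNReal) else 0)
          ∂(gridMeasure m n γ hγ1.le)) / ((m : ENNReal) * n)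
      = (1 - 2 * k / (m : ENNReal)) * (1 - 2 * k / (n : ENNReal)) *
          (1 - (1 - γ) ^ ((2 * k + 1) ^ 2))
        + 4 * ((k ^ 2 : ENNReal) -
            ∑ i ∈ Finset.Icc 1 k, ∑ j ∈ Finset.Icc 1 k,
              (1 - γ) ^ ((k + i) * (k + j))) / ((m : ENNReal) * n)
        + 2 * (1 / (m : ENNReal) + 1 / (n : ENNReal) - 4 * k / ((m : ENNReal) * n)) *
            ((k : ENNReal) - (1 - γ) ^ ((2 * k + 1) * (k + 1)) *
              (1 - (1 - γ) ^ ((2 * k + 1) * k)) / (1 - (1 - γ) ^ (2 * k + 1))) :=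
  p_gamma_relationship_general m n k hm hn γ hγ0 hγ1
end

section
/- For fixed integers k ≥ 1 and m,n > 2(2k+1), let p₁(γ) = 1 - (1-γ)^{(2k+1)²}, p₂(γ) = (m-2k)(n-2k)(1-(1-γ)^{(2k+1)²})/(mn), and let p(γ) be the full boundary-corrected expression: p(γ) = (1-2k/m)(1-2k/n)(1-(1-γ)^{(2k+1)²}) + (4/(mn))(k² - Σ_{1≤i,j≤k}(1-γ)^{(k+i)(k+j)}) + 2(1/m+1/n-4k/(mn))·Σ_{j=1}^{k}(1-(1-γ)^{(2k+1)(k+j)}). Then for all γ ∈ [0,1], p₂(γ) ≤ p(γ) ≤ p₁(γ). -/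
/-!
Put `x = 1 - γ ∈ [0, 1]` and `b = 2k + 1`. Every exponent occurring in `p` is at most `b²`, so
each power of `x` there lies between `x ^ b²` and `1`. With `S₁, S₂` the two boundary sums this
gives `0 ≤ S₁ ≤ k (1 - x ^ b²)` and `k² x ^ b² ≤ S₂ ≤ k²`. Moreover `p - p₂` and `p₁ - p` are
combinations of `k² - S₂, S₁`, resp. `S₂ - k² x ^ b², k (1 - x ^ b²) - S₁`, with the nonnegative
coefficients `4 / (m n)` and `2 (m + n - 4k) / (m n)`.
-/

open Finset

section PowerSums

variable {ι : Type*} (s : Finset ι) (e : ι → ℕ) {x : ℝ}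

lemma card_mul_pow_le_sum_pow {N : ℕ} (he : ∀ i ∈ s, e i ≤ N) (hx₀ : 0 ≤ x) (hx₁ : x ≤ 1) :
    #s * x ^ N ≤ ∑ i ∈ s, x ^ e i := by
  rw [← nsmul_eq_mul]
  exact card_nsmul_le_sum s _ _ fun i hi => pow_le_pow_of_le_one hx₀ hx₁ (he i hi)

lemma sum_pow_le_card (hx₀ : 0 ≤ x) (hx₁ : x ≤ 1) : ∑ i ∈ s, x ^ e i ≤ #s := by
  simpa using sum_le_card_nsmul s _ (1 : ℝ) fun i _ => pow_le_one₀ hx₀ hx₁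

end PowerSums

section BoundarySums

variable (k : ℕ) {x : ℝ}

lemma edge_sum_bounds (hx₀ : 0 ≤ x) (hx₁ : x ≤ 1) :
    0 ≤ ∑ j ∈ Icc 1 k, (1 - x ^ ((2 * k + 1) * (k + j))) ∧
      ∑ j ∈ Icc 1 k, (1 - x ^ ((2 * k + 1) * (k + j))) ≤ k * (1 - x ^ ((2 * k + 1) ^ 2)) := by
  have hexp : ∀ j ∈ Icc 1 k, (2 * k + 1) * (k + j) ≤ (2 * k + 1) ^ 2 := fun j hj => by
    rw [sq]; exact Nat.mul_le_mul_left _ (by grind)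
  have lower := card_mul_pow_le_sum_pow (Icc 1 k) _ hexp hx₀ hx₁
  have upper := sum_pow_le_card (Icc 1 k) (fun j => (2 * k + 1) * (k + j)) hx₀ hx₁
  simp only [sum_sub_distrib, sum_const, Nat.card_Icc, add_tsub_cancel_right, nsmul_eq_mul,
    mul_one] at lower upper ⊢
  constructor <;> linarith

lemma corner_sum_bounds (hx₀ : 0 ≤ x) (hx₁ : x ≤ 1) :
    (k : ℝ) ^ 2 * x ^ ((2 * k + 1) ^ 2) ≤
        ∑ i ∈ Icc 1 k, ∑ j ∈ Icc 1 k, x ^ ((k + i) * (k + j)) ∧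
      ∑ i ∈ Icc 1 k, ∑ j ∈ Icc 1 k, x ^ ((k + i) * (k + j)) ≤ (k : ℝ) ^ 2 := by
  have hexp : ∀ ij ∈ Icc 1 k ×ˢ Icc 1 k, (k + ij.1) * (k + ij.2) ≤ (2 * k + 1) ^ 2 :=
    fun ij hij => by
      simp only [mem_product, mem_Icc] at hij
      rw [sq]; exact Nat.mul_le_mul (by omega) (by omega)
  have lower := card_mul_pow_le_sum_pow _ _ hexp hx₀ hx₁
  have upper := sum_pow_le_card (Icc 1 k ×ˢ Icc 1 k)
    (fun ij => (k + ij.1) * (k + ij.2)) hx₀ hx₁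
  rw [sum_product] at lower upper
  simp only [card_product, Nat.card_Icc, add_tsub_cancel_right, Nat.cast_mul] at lower upper
  rw [← sq] at lower upper
  exact ⟨lower, upper⟩

end BoundarySums

lemma boundary_corrected_sandwich {m n k X S₁ S₂ : ℝ} (hm₀ : 0 < m) (hn₀ : 0 < n)
    (hm : 2 * k ≤ m) (hn : 2 * k ≤ n) (hS₁ : 0 ≤ S₁ ∧ S₁ ≤ k * (1 - X))
    (hS₂ : k ^ 2 * X ≤ S₂ ∧ S₂ ≤ k ^ 2) :
    (m - 2 * k) * (n - 2 * k) * (1 - X) / (m * n) ≤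
        (1 - 2 * k / m) * (1 - 2 * k / n) * (1 - X) + 4 / (m * n) * (k ^ 2 - S₂)
          + 2 * (1 / m + 1 / n - 4 * k / (m * n)) * S₁ ∧
      (1 - 2 * k / m) * (1 - 2 * k / n) * (1 - X) + 4 / (m * n) * (k ^ 2 - S₂)
          + 2 * (1 / m + 1 / n - 4 * k / (m * n)) * S₁ ≤ 1 - X := by
  have hmn : 0 < m * n := mul_pos hm₀ hn₀
  have hC₀ : 0 ≤ 1 / m + 1 / n - 4 * k / (m * n) := by
    have hC : 1 / m + 1 / n - 4 * k / (m * n) = (m + n - 4 * k) / (m * n) := by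
      field_simp; ring
    rw [hC]; exact div_nonneg (by linarith) hmn.le
  have h4 : 0 ≤ 4 / (m * n) := by positivity
  constructor
  · have hcenter : (m - 2 * k) * (n - 2 * k) * (1 - X) / (m * n)
        = (1 - 2 * k / m) * (1 - 2 * k / n) * (1 - X) := by
      field_simp
    rw [hcenter]
    linarith [mul_nonneg h4 (sub_nonneg.2 hS₂.2), mul_nonneg hC₀ hS₁.1]
  · have hgap : 1 - (1 - 2 * k / m) * (1 - 2 * k / n)
        = 4 / (m * n) * k ^ 2 + 2 * (1 / m + 1 / n - 4 * k / (m * n)) * k := by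
      field_simp; ring
    have hdiff : 1 - X - ((1 - 2 * k / m) * (1 - 2 * k / n) * (1 - X)
          + 4 / (m * n) * (k ^ 2 - S₂) + 2 * (1 / m + 1 / n - 4 * k / (m * n)) * S₁)
        = 4 / (m * n) * (S₂ - k ^ 2 * X)
          + 2 * (1 / m + 1 / n - 4 * k / (m * n)) * (k * (1 - X) - S₁) := by
      linear_combination (1 - X) * hgap
    linarith [mul_nonneg h4 (sub_nonneg.2 hS₂.1), mul_nonneg hC₀ (sub_nonneg.2 hS₁.2)]

theorem p_sandwich_general (m n k : ℕ)
    (hm : 2 * (2 * k + 1) < m) (hn : 2 * (2 * k + 1) < n)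
    (p₁ p₂ p : ℝ → ℝ)
    (hp₁ : ∀ γ : ℝ, p₁ γ = 1 - (1 - γ) ^ ((2 * k + 1) ^ 2))
    (hp₂ : ∀ γ : ℝ, p₂ γ = ((m - 2 * k : ℕ) : ℝ) * ((n - 2 * k : ℕ) : ℝ) *
        (1 - (1 - γ) ^ ((2 * k + 1) ^ 2)) / ((m : ℝ) * n))
    (hp : ∀ γ : ℝ, p γ =
        (1 - 2 * k / (m : ℝ)) * (1 - 2 * k / (n : ℝ)) * (1 - (1 - γ) ^ ((2 * k + 1) ^ 2))
        + 4 / ((m : ℝ) * n) * ((k ^ 2 : ℝ) -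
            ∑ i ∈ Finset.Icc 1 k, ∑ j ∈ Finset.Icc 1 k, (1 - γ) ^ ((k + i) * (k + j)))
        + 2 * (1 / (m : ℝ) + 1 / (n : ℝ) - 4 * k / ((m : ℝ) * n)) *
            ∑ j ∈ Finset.Icc 1 k, (1 - (1 - γ) ^ ((2 * k + 1) * (k + j)))) :
    ∀ γ ∈ Set.Icc (0 : ℝ) 1, p₂ γ ≤ p γ ∧ p γ ≤ p₁ γ := by
  rintro γ ⟨hγ₀, hγ₁⟩
  have hx₀ : 0 ≤ 1 - γ := by linarith
  have hx₁ : 1 - γ ≤ 1 := by linarith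
  have hm' : 2 * k ≤ m := by omega
  have hn' : 2 * k ≤ n := by omega
  rw [hp₁, hp₂, hp, Nat.cast_sub hm', Nat.cast_sub hn']
  push_cast
  exact boundary_corrected_sandwich (by exact_mod_cast (by omega : 0 < m))
    (by exact_mod_cast (by omega : 0 < n))
    (by exact_mod_cast hm') (by exact_mod_cast hn')
    (edge_sum_bounds k hx₀ hx₁) (corner_sum_bounds k hx₀ hx₁)

/-- The exact boundary-corrected drop fraction `p(γ)` is sandwiched between the
restricted-center drop probability `p₂(γ)` and the no-boundary approximation `p₁(γ)`. -/
theorem p_sandwich (m n k : ℕ) (hk : 1 ≤ k)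
    (hm : 2 * (2 * k + 1) < m) (hn : 2 * (2 * k + 1) < n)
    (p₁ p₂ p : ℝ → ℝ)
    (hp₁ : ∀ γ : ℝ, p₁ γ = 1 - (1 - γ) ^ ((2 * k + 1) ^ 2))
    (hp₂ : ∀ γ : ℝ, p₂ γ = ((m - 2 * k : ℕ) : ℝ) * ((n - 2 * k : ℕ) : ℝ) *
        (1 - (1 - γ) ^ ((2 * k + 1) ^ 2)) / ((m : ℝ) * n))
    (hp : ∀ γ : ℝ, p γ =
        (1 - 2 * k / (m : ℝ)) * (1 - 2 * k / (n : ℝ)) * (1 - (1 - γ) ^ ((2 * k + 1) ^ 2))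
        + 4 / ((m : ℝ) * n) * ((k ^ 2 : ℝ) -
            ∑ i ∈ Finset.Icc 1 k, ∑ j ∈ Finset.Icc 1 k, (1 - γ) ^ ((k + i) * (k + j)))
        + 2 * (1 / (m : ℝ) + 1 / (n : ℝ) - 4 * k / ((m : ℝ) * n)) *
            ∑ j ∈ Finset.Icc 1 k, (1 - (1 - γ) ^ ((2 * k + 1) * (k + j)))) :
    ∀ γ ∈ Set.Icc (0 : ℝ) 1, p₂ γ ≤ p γ ∧ p γ ≤ p₁ γ :=
  p_sandwich_general m n k hm hn p₁ p₂ p hp₁ hp₂ hp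
end

section
/- For integers m,n with m,n > 2(2k+1) and k ≥ 1, the window-size function N(i,j) = (min(i+k,m) - max(i-k,1) + 1)·(min(j+k,n) - max(j-k,1) + 1) satisfies, with x = 1-γ, Σ_{(i,j)∈[m]×[n]} (1-γ)^{N(i,j)} = (m-2k)(n-2k)x^{(2k+1)²} + 4Σ_{1≤i,j≤k} x^{(k+i)(k+j)} + 2(m+n-4k)Σ_{j=1}^{k} x^{(2k+1)(k+j)}. -/
lemma window_aux (m k : ℕ) (hk : 1 ≤ k) (hm : 2 * (2 * k + 1) < m) (g : ℕ → ℝ) :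
    ∑ i ∈ Finset.Icc 1 m, g (min (i + k) m - max (i - k) 1 + 1)
      = ((m - 2 * k : ℕ) : ℝ) * g (2 * k + 1) + 2 * ∑ i ∈ Finset.Icc 1 k, g (k + i) := by
  have h1 : Finset.Icc 1 m = Finset.Ioc 0 m := by rw [← Finset.Icc_add_one_left_eq_Ioc]; rfl
  have h2 : Finset.Icc 1 k = Finset.Ioc 0 k := by rw [← Finset.Icc_add_one_left_eq_Ioc]; rfl
  rw [h1, h2]
  rw [← Finset.sum_Ioc_consecutive _ (Nat.zero_le (m - k)) (Nat.sub_le m k),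
      ← Finset.sum_Ioc_consecutive _ (Nat.zero_le k) (by omega : k ≤ m - k)]
  have e1 : ∑ i ∈ Finset.Ioc 0 k, g (min (i + k) m - max (i - k) 1 + 1)
      = ∑ i ∈ Finset.Ioc 0 k, g (k + i) := by
    refine Finset.sum_congr rfl fun i hi => ?_
    simp only [Finset.mem_Ioc] at hi
    congr 1
    omega
  have e2 : ∑ i ∈ Finset.Ioc k (m - k), g (min (i + k) m - max (i - k) 1 + 1)
      = ((m - 2 * k : ℕ) : ℝ) * g (2 * k + 1) := by
    rw [Finset.sum_congr rfl (fun i hi => ?_), Finset.sum_const, Nat.card_Ioc]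
    · rw [nsmul_eq_mul]
      congr 2
      omega
    · simp only [Finset.mem_Ioc] at hi
      congr 1
      omega
  have e3 : ∑ i ∈ Finset.Ioc (m - k) m, g (min (i + k) m - max (i - k) 1 + 1)
      = ∑ i ∈ Finset.Ioc 0 k, g (k + i) := by
    rw [Finset.sum_congr rfl (fun i hi => ?_ :
      ∀ i ∈ Finset.Ioc (m - k) m, g (min (i + k) m - max (i - k) 1 + 1) = g (m + k + 1 - i))]
    · refine Finset.sum_nbij' (fun i => m + 1 - i) (fun j => m + 1 - j) ?_ ?_ ?_ ?_ ?_
      · intro a ha; simp only [Finset.mem_Ioc] at *; omega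
      · intro a ha; simp only [Finset.mem_Ioc] at *; omega
      · intro a ha; simp only [Finset.mem_Ioc] at ha; omega
      · intro a ha; simp only [Finset.mem_Ioc] at ha; omega
      · intro a ha; simp only [Finset.mem_Ioc] at ha; congr 1; omega
    · simp only [Finset.mem_Ioc] at hi
      congr 1
      omega
  rw [e1, e2, e3]; ring

/-- Partition identity for the clipped-window sizes
`N(i,j) = (min(i+k,m) - max(i-k,1) + 1)(min(j+k,n) - max(j-k,1) + 1)` on a 1-based
`m × n` grid: `Σ_{(i,j)} x^{N(i,j)} = (m-2k)(n-2k) x^{(2k+1)²}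
+ 4 Σ_{1≤i,j≤k} x^{(k+i)(k+j)} + 2(m+n-4k) Σ_{j=1}^{k} x^{(2k+1)(k+j)}`. -/
theorem window_size_partition (m n k : ℕ) (hk : 1 ≤ k)
    (hm : 2 * (2 * k + 1) < m) (hn : 2 * (2 * k + 1) < n)
    (x : ℝ) (hx0 : 0 ≤ x) (hx1 : x ≤ 1) :
    ∑ i ∈ Finset.Icc 1 m, ∑ j ∈ Finset.Icc 1 n,
        x ^ ((min (i + k) m - max (i - k) 1 + 1) * (min (j + k) n - max (j - k) 1 + 1))
      = ((m - 2 * k : ℕ) : ℝ) * ((n - 2 * k : ℕ) : ℝ) * x ^ ((2 * k + 1) ^ 2)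
        + 4 * ∑ i ∈ Finset.Icc 1 k, ∑ j ∈ Finset.Icc 1 k, x ^ ((k + i) * (k + j))
        + 2 * ((m + n - 4 * k : ℕ) : ℝ) *
            ∑ j ∈ Finset.Icc 1 k, x ^ ((2 * k + 1) * (k + j)) := by
  rw [window_aux m k hk hm
    (fun a => ∑ j ∈ Finset.Icc 1 n, x ^ (a * (min (j + k) n - max (j - k) 1 + 1)))]
  rw [window_aux n k hk hn (fun a => x ^ ((2 * k + 1) * a))]
  have e4 : ∀ i, ∑ j ∈ Finset.Icc 1 n, x ^ ((k + i) * (min (j + k) n - max (j - k) 1 + 1))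
      = ((n - 2 * k : ℕ) : ℝ) * x ^ ((k + i) * (2 * k + 1))
        + 2 * ∑ j ∈ Finset.Icc 1 k, x ^ ((k + i) * (k + j)) :=
    fun i => window_aux n k hk hn (fun a => x ^ ((k + i) * a))
  simp only [e4, Finset.sum_add_distrib, Finset.mul_sum]
  have e5 : ∀ i, x ^ ((k + i) * (2 * k + 1)) = x ^ ((2 * k + 1) * (k + i)) := by
    intro i; rw [mul_comm]
  simp only [e5, ← Finset.mul_sum]
  have hc : ((m + n - 4 * k : ℕ) : ℝ) = ((m - 2 * k : ℕ) : ℝ) + ((n - 2 * k : ℕ) : ℝ) := by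
    have : m + n - 4 * k = (m - 2 * k) + (n - 2 * k) := by omega
    rw [this, Nat.cast_add]
  rw [hc]
  have : (2 * k + 1) ^ 2 = (2 * k + 1) * (2 * k + 1) := by ring
  rw [this]
  ring
end
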